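/- arXiv:2006.07592 — 3 statements merged into one kernel-verified Lean document; each statement's English description precedes it below -/
import Mathlib

section
/- For any two vectors v, w ∈ ℝ² with w ≠ 0, one has v·(v − w)/|w| ≥ |v| − |w|, and consequently for piecewise linear curves X^{m+1}, X^m over the same partition, Σ_j (h_j^{m+1}·(h_j^{m+1} − h_j^m))/|h_j^m| ≥ Σ_j |h_j^{m+1}| − Σ_j |h_j^m|, i.e., the discrete length functional satisfies (∂_s X^{m+1}, ∂_s(X^{m+1} − X^m))_{Γ^m}^h ≥ |Γ^{m+1}| − |Γ^m|. -/
open RealInnerProductSpace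

section InnerProductSpace

variable {E : Type*} [NormedAddCommGroup E] [InnerProductSpace ℝ E]

theorem norm_sub_norm_le_inner_sub_div_norm (v : E) {w : E} (hw : w ≠ 0) :
    ‖v‖ - ‖w‖ ≤ ⟪v, v - w⟫ / ‖w‖ := by
  have hw_pos : 0 < ‖w‖ := norm_pos_iff.mpr hw
  rw [le_div_iff₀ hw_pos]
  calc (‖v‖ - ‖w‖) * ‖w‖ ≤ (‖v‖ - ‖w‖) * ‖w‖ + (‖v‖ - ‖w‖) ^ 2 := by
        linarith [sq_nonneg (‖v‖ - ‖w‖)]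
    _ = ‖v‖ ^ 2 - ‖v‖ * ‖w‖ := by ring
    _ ≤ ‖v‖ ^ 2 - ⟪v, w⟫ := by linarith [real_inner_le_norm v w]
    _ = ⟪v, v - w⟫ := by rw [inner_sub_right, real_inner_self_eq_norm_sq]

theorem sum_norm_sub_sum_norm_le_sum_inner_sub_div_norm {ι : Type*} (s : Finset ι)
    (f g : ι → E) (hg : ∀ i ∈ s, g i ≠ 0) :
    ∑ i ∈ s, ‖f i‖ - ∑ i ∈ s, ‖g i‖ ≤ ∑ i ∈ s, ⟪f i, f i - g i⟫ / ‖g i‖ := by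
  rw [← Finset.sum_sub_distrib]
  exact Finset.sum_le_sum fun i hi => norm_sub_norm_le_inner_sub_div_norm (f i) (hg i hi)

end InnerProductSpace

/-- The vector inequality `v·(v − w)/|w| ≥ |v| − |w|` for `w ≠ 0`, and the resulting
discrete length estimate: for segment vectors `h'_j = h_j^{m+1}`, `h_j = h_j^m` (all nonzero),
`Σ_j (h'_j·(h'_j − h_j))/|h_j| ≥ Σ_j |h'_j| − Σ_j |h_j|`,
i.e. `(∂_s X^{m+1}, ∂_s(X^{m+1} − X^m))_{Γ^m}^h ≥ |Γ^{m+1}| − |Γ^m|`. -/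
theorem stmt_3 (J : ℕ) (h h' : Fin J → EuclideanSpace ℝ (Fin 2))
    (hne : ∀ j, h j ≠ 0) :
    (∀ v w : EuclideanSpace ℝ (Fin 2), w ≠ 0 → ⟪v, v - w⟫ / ‖w‖ ≥ ‖v‖ - ‖w‖) ∧
    ∑ j, ⟪h' j, h' j - h j⟫ / ‖h j‖ ≥ (∑ j, ‖h' j‖) - ∑ j, ‖h j‖ :=
  ⟨fun v _ hw => norm_sub_norm_le_inner_sub_div_norm v hw,
    sum_norm_sub_sum_norm_le_sum_inner_sub_div_norm _ h' h fun j _ => hne j⟩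
end

section
/- Let Γ^m be a polygonal curve with vertices X^m(α_0), …, X^m(α_J) in ℝ², no two consecutive vertices equal, and such that the first and last segments are not parallel to the x-axis (i.e., their normal vectors have nonzero first component). Suppose κ : {α_0,…,α_J} → ℝ satisfies the discrete orthogonality relation Σ_j ½|h_j|[ (κ n_j · g)(α_{j-1}) + (κ n_j · g)(α_j) ] = 0 for all piecewise linear test vector fields g = (g₁, g₂) with g₂(α_0) = g₂(α_J) = 0, where h_j = X^m(α_j) − X^m(α_{j-1}) and n_j = h_j^⊥/|h_j|. If additionally at interior vertices the vectors h_j + h_{j+1} are nonzero, then κ(α_j) = 0 for all j. -/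
/-!
Since `|h_j| n_j = h_j^⊥`, the lumped product against the test field supported at a single node
`α_i` with value `v` collapses to `½ κ(α_i) (h_{i-1} + h_i)^⊥ · v`. At an interior node take
`v = (h_{i-1} + h_i)^⊥ ≠ 0`; at an endpoint `v` must be horizontal, and `v = (1, 0)` works because
the end normal is not vertical. Each choice forces `κ(α_i) = 0`.
-/

open Complex Finset

/-- Euclidean dot product of two points of `ℝ² ≃ ℂ`. -/
noncomputable def dot2 (v w : ℂ) : ℝ := v.re * w.re + v.im * w.im

lemma dot2_zero_right (w : ℂ) : dot2 w 0 = 0 := by simp [dot2]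

lemma dot2_zero_left (v : ℂ) : dot2 0 v = 0 := by simp [dot2]

lemma dot2_one_right (w : ℂ) : dot2 w 1 = w.re := by simp [dot2]

lemma dot2_add_left (w w' v : ℂ) : dot2 (w + w') v = dot2 w v + dot2 w' v := by
  simp only [dot2, add_re, add_im]; ring

lemma dot2_smul_left (c : ℝ) (w v : ℂ) : dot2 (c • w) v = c * dot2 w v := by
  simp only [dot2, smul_re, smul_im, smul_eq_mul]; ring

lemma dot2_self (v : ℂ) : dot2 v v = normSq v := by
  simp [dot2, normSq_apply]

/-- With `a j = |h_j| n_j = h_j^⊥`, the paper's mass-lumped product `(κ n, g)^h` is half of this. -/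
noncomputable def lumpedPairing (J : ℕ) (κ : ℕ → ℝ) (a g : ℕ → ℂ) : ℝ :=
  ∑ j ∈ range J, (κ j * dot2 (a j) (g j) + κ (j + 1) * dot2 (a j) (g (j + 1)))

/-- The nodal vector `(h_{i-1} + h_i)^⊥` of the paper's test function, with the segments that do
not exist at the two endpoints omitted. -/
def nodeNormal (J : ℕ) (a : ℕ → ℂ) (i : ℕ) : ℂ :=
  (if 0 < i then a (i - 1) else 0) + (if i < J then a i else 0)

lemma lumpedPairing_single {J i : ℕ} (hi : i ≤ J) (κ : ℕ → ℝ) (a : ℕ → ℂ) (v : ℂ) :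
    lumpedPairing J κ a (Pi.single i v) = κ i * dot2 (nodeNormal J a i) v := by
  have hnode : ∀ j, κ j * dot2 (a j) ((Pi.single i v : ℕ → ℂ) j) =
      if j = i then κ i * dot2 (a i) v else 0 := by
    intro j
    rcases eq_or_ne j i with rfl | hji
    · simp
    · simp [hji, dot2_zero_right]
  have hprev : ∑ j ∈ range J, κ (j + 1) * dot2 (a j) ((Pi.single i v : ℕ → ℂ) (j + 1)) =
      if 0 < i then κ i * dot2 (a (i - 1)) v else 0 := by
    rcases i with _ | k
    · simp [dot2_zero_right]
    · simp only [Pi.single_apply, add_left_inj, apply_ite, dot2_zero_right, mul_zero]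
      rw [sum_ite_eq' (range J) k]
      simp [show k < J by omega]
  simp only [lumpedPairing, sum_add_distrib, hnode, sum_ite_eq', mem_range, hprev, nodeNormal,
    dot2_add_left]
  split_ifs <;> simp only [dot2_zero_left, mul_add, mul_zero, add_zero, add_comm]

lemma exists_admissible_single_dot2_ne_zero {J i : ℕ} (hJ : 0 < J) (hi : i ≤ J) {a : ℕ → ℂ}
    (hfirst : (a 0).re ≠ 0) (hlast : (a (J - 1)).re ≠ 0)
    (hint : ∀ j, 0 < j → j < J → a (j - 1) + a j ≠ 0) :
    ∃ v : ℂ, ((Pi.single i v : ℕ → ℂ) 0).im = 0 ∧ ((Pi.single i v : ℕ → ℂ) J).im = 0 ∧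
      dot2 (nodeNormal J a i) v ≠ 0 := by
  rcases Nat.eq_zero_or_pos i with rfl | hi0
  · refine ⟨1, by simp, by simp [hJ.ne'], ?_⟩
    simpa [nodeNormal, hJ, dot2_one_right] using hfirst
  rcases hi.lt_or_eq with hiJ | rfl
  · refine ⟨nodeNormal J a i, by simp [hi0.ne], by simp [hiJ.ne'], ?_⟩
    rw [dot2_self, ne_eq, normSq_eq_zero]
    simpa [nodeNormal, hi0, hiJ] using hint i hi0 hiJ
  · refine ⟨1, by simp [hi0.ne], by simp, ?_⟩
    simpa [nodeNormal, hi0, dot2_one_right] using hlast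

theorem stmt_11_general (J : ℕ) (hJ : 1 ≤ J) (κ : ℕ → ℝ)
    (h : ℕ → ℂ) (n : ℕ → ℂ)
    (hne : ∀ j < J, h j ≠ 0)
    (hn : ∀ j, n j = ‖h j‖⁻¹ • (Complex.I * h j))
    (hfirst : (n 0).re ≠ 0) (hlast : (n (J - 1)).re ≠ 0)
    (hint : ∀ j, 0 < j → j < J → h (j - 1) + h j ≠ 0)
    (orth : ∀ g : ℕ → ℂ, (g 0).im = 0 → (g J).im = 0 →
      ∑ j ∈ Finset.range J, (1 / 2 : ℝ) * ‖h j‖ *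
        (κ j * dot2 (n j) (g j) + κ (j + 1) * dot2 (n j) (g (j + 1))) = 0) :
    ∀ j ≤ J, κ j = 0 := by
  have hscaled : ∀ j < J, ‖h j‖ • n j = I * h j := fun j hj => by
    rw [hn, smul_inv_smul₀ (norm_ne_zero_iff.2 (hne j hj))]
  have hpair : ∀ g : ℕ → ℂ, (g 0).im = 0 → (g J).im = 0 →
      lumpedPairing J κ (fun j => I * h j) g = 0 := by
    intro g hg0 hgJ
    have hhalf : (1 / 2 : ℝ) * lumpedPairing J κ (fun j => I * h j) g = 0 := by
      rw [← orth g hg0 hgJ, lumpedPairing, mul_sum]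
      refine sum_congr rfl fun j hj => ?_
      rw [← hscaled j (mem_range.1 hj), dot2_smul_left, dot2_smul_left]
      ring
    simpa using hhalf
  have hre : ∀ j, (n j).re ≠ 0 → (I * h j).re ≠ 0 := fun j hnj hzero =>
    hnj (by rw [hn, smul_re, hzero, smul_zero])
  intro i hi
  obtain ⟨v, hv0, hvJ, hv⟩ := exists_admissible_single_dot2_ne_zero (a := fun j => I * h j) hJ hi
    (hre 0 hfirst) (hre (J - 1) hlast) fun j hj0 hjJ => by simpa [← mul_add] using hint j hj0 hjJ
  have hzero := hpair _ hv0 hvJ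
  rw [lumpedPairing_single hi] at hzero
  exact (mul_eq_zero.1 hzero).resolve_right hv

/-- Discrete curvature orthogonality forces `κ = 0`: for a polygonal curve with
vertices `X 0, …, X J`, segment vectors `h j = X (j+1) − X j` all nonzero,
unit normals `n j = h_j^⊥/|h_j|` whose first and last first components are nonzero,
and `h j + h (j+1) ≠ 0` at interior vertices, if the mass-lumped (trapezoidal)
inner product `(κ n, g)_{Γ}^h` vanishes for all piecewise linear test fields `g`
with vanishing second component at the endpoints, then `κ` vanishes at every node. -/
theorem stmt_11 (J : ℕ) (hJ : 1 ≤ J) (X : ℕ → ℂ) (κ : ℕ → ℝ)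
    (h : ℕ → ℂ) (n : ℕ → ℂ)
    (hdef : ∀ j, h j = X (j + 1) - X j)
    (hne : ∀ j < J, h j ≠ 0)
    (hn : ∀ j, n j = ‖h j‖⁻¹ • (Complex.I * h j))
    (hfirst : (n 0).re ≠ 0) (hlast : (n (J - 1)).re ≠ 0)
    (hint : ∀ j, 0 < j → j < J → h (j - 1) + h j ≠ 0)
    (orth : ∀ g : ℕ → ℂ, (g 0).im = 0 → (g J).im = 0 →
      ∑ j ∈ Finset.range J, (1 / 2 : ℝ) * ‖h j‖ *
        (κ j * dot2 (n j) (g j) + κ (j + 1) * dot2 (n j) (g (j + 1))) = 0) :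
    ∀ j ≤ J, κ j = 0 :=
  stmt_11_general J hJ κ h n hne hn hfirst hlast hint orth
end

section
/- Discrete contact angle error bound: let X^h be a polygonal equilibrium interface solving the discrete curvature equation with contact-angle boundary terms, so that ½ κ^h(0) n_{1,1} Δs − cos θ^h + cos θ_Y = 0, where Δs = |X^h(α₁) − X^h(α₀)|, θ^h is the discrete contact angle (so n_{1,1} = −sin θ^h up to sign) and κ^h(0) is the discrete curvature at the contact node. Then |cos θ^h − cos θ_Y| = ½|κ^h(0) sin θ^h| Δs. Consequently, if |κ^h(0)| ≤ C (Δs)^{2(ν−1)} for some ν ∈ (1/2, 1], then |cos θ^h − cos θ_Y| ≤ (C/2)(Δs)^{2ν−1}, and since |θ^h − θ_Y| ≤ (π/ sin θ_*) |cos θ^h − cos θ_Y| on a neighborhood where sin is bounded below by sin θ_* > 0, also |θ^h − θ_Y| ≤ C' h^{2ν−1}. -/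
open Real

lemma abs_sub_eq_of_half_mul_sub_add_eq_zero {κ n s Δ c c' : ℝ} (hΔ : 0 ≤ Δ)
    (heq : 1 / 2 * κ * n * Δ - c + c' = 0) (hn : |n| = |s|) :
    |c - c'| = 1 / 2 * |κ * s| * Δ := by
  rw [show c - c' = 1 / 2 * κ * n * Δ by linarith, abs_mul, abs_mul, abs_mul, abs_mul, hn,
    abs_of_nonneg hΔ, abs_of_pos one_half_pos, mul_assoc (1 / 2)]

lemma half_mul_abs_mul_sin_le_rpow {κ θ Δ C p : ℝ} (hΔ : 0 < Δ) (hκ : |κ| ≤ C * Δ ^ p) :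
    1 / 2 * |κ * sin θ| * Δ ≤ C / 2 * Δ ^ (p + 1) := by
  have hκsin : |κ * sin θ| ≤ C * Δ ^ p := by
    rw [abs_mul]
    exact (mul_le_of_le_one_right (abs_nonneg κ) (abs_sin_le_one θ)).trans hκ
  calc 1 / 2 * |κ * sin θ| * Δ ≤ 1 / 2 * (C * Δ ^ p) * Δ := by gcongr
    _ = C / 2 * Δ ^ (p + 1) := by rw [rpow_add_one hΔ.ne']; ring

/-- Discrete contact angle error bound: from the tested discrete curvature equation
`½ κ₀ n₁,₁ Δs − cos θʰ + cos θ_Y = 0` with `|n₁,₁| = |sin θʰ|`, one gets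
`|cos θʰ − cos θ_Y| = ½|κ₀ sin θʰ| Δs`; if moreover `|κ₀| ≤ C (Δs)^{2(ν−1)}` then
`|cos θʰ − cos θ_Y| ≤ (C/2)(Δs)^{2ν−1}`, and if additionally
`|θʰ − θ_Y| ≤ (π/sin θ⋆)|cos θʰ − cos θ_Y|` and `Δs ≤ h`, then
`|θʰ − θ_Y| ≤ C' h^{2ν−1}` with `C' = (π/sin θ⋆)(C/2)`. -/
theorem stmt_18 (κ₀ n₁₁ Δs θh θY C ν θstar hmesh : ℝ)
    (hΔs : 0 < Δs) (hC : 0 ≤ C) (hν : ν ∈ Set.Ioc (1 / 2 : ℝ) 1)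
    (heq : (1 / 2) * κ₀ * n₁₁ * Δs - Real.cos θh + Real.cos θY = 0)
    (hn : |n₁₁| = |Real.sin θh|) :
    |Real.cos θh - Real.cos θY| = (1 / 2) * |κ₀ * Real.sin θh| * Δs ∧
    (|κ₀| ≤ C * Δs ^ (2 * (ν - 1)) →
      |Real.cos θh - Real.cos θY| ≤ (C / 2) * Δs ^ (2 * ν - 1)) ∧
    (|κ₀| ≤ C * Δs ^ (2 * (ν - 1)) → 0 < Real.sin θstar → Δs ≤ hmesh →
      |θh - θY| ≤ (π / Real.sin θstar) * |Real.cos θh - Real.cos θY| →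
      |θh - θY| ≤ (π / Real.sin θstar) * (C / 2) * hmesh ^ (2 * ν - 1)) := by
  have hcos := abs_sub_eq_of_half_mul_sub_add_eq_zero hΔs.le heq hn
  have hcos_le (hκ : |κ₀| ≤ C * Δs ^ (2 * (ν - 1))) :
      |Real.cos θh - Real.cos θY| ≤ (C / 2) * Δs ^ (2 * ν - 1) := by
    rw [hcos, show 2 * ν - 1 = 2 * (ν - 1) + 1 by ring]
    exact half_mul_abs_mul_sin_le_rpow hΔs hκ
  refine ⟨hcos, hcos_le, fun hκ hsin hmesh_ge hθ => ?_⟩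
  have hexp : 0 ≤ 2 * ν - 1 := by linarith [hν.1]
  calc |θh - θY| ≤ (π / Real.sin θstar) * |Real.cos θh - Real.cos θY| := hθ
    _ ≤ (π / Real.sin θstar) * ((C / 2) * Δs ^ (2 * ν - 1)) := by gcongr; exact hcos_le hκ
    _ ≤ (π / Real.sin θstar) * (C / 2) * hmesh ^ (2 * ν - 1) := by
      rw [← mul_assoc]; gcongr
end
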